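/- arXiv:1607.01768 — 4 statements merged into one kernel-verified Lean document; each statement's English description precedes it below -/
import Mathlib

section
/- Let $n \ge 2$ and consider the gdit states $(j,k)$ for $j,k \in \{1,\dots,n\}$, which under measurement of $X$ or $Z$ deterministically return $j$ or $k$ respectively. There is no family of numbers $M(a,b\mid\psi) \in [0,1]$, defined for all outcome pairs $(a,b)$ and all pure states $\psi = (j,k)$, such that (i) $\sum_b M(a,b\mid(j,k)) = \delta_{a,j}$ and $\sum_a M(a,b\mid(j,k)) = \delta_{b,k}$ for all $j,k$, and (ii) for all $j \ne j'$, $k \ne k'$, and all outcome pairs $(a,b)$: $M(a,b\mid(j,k)) + M(a,b\mid(j',k')) = M(a,b\mid(j,k')) + M(a,b\mid(j',k))$. -/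
/-- in the 2-input-`n`-output gdit theory (pure states `(j,k)`
returning `j` under `X` and `k` under `Z` deterministically), no joint
measurement exists: there is no `[0,1]`-valued family `M a b (j,k)` with
δ-type marginals that respects the nonsimpliciality conditions
`M(a,b|(j,k)) + M(a,b|(j',k')) = M(a,b|(j,k')) + M(a,b|(j',k))`. -/
theorem no_joint_measurement_gdit (n : ℕ) (hn : 2 ≤ n) :
    ¬ ∃ M : Fin n → Fin n → Fin n × Fin n → ℝ,
      (∀ a b ψ, 0 ≤ M a b ψ ∧ M a b ψ ≤ 1) ∧
      (∀ j k a, ∑ b, M a b (j, k) = if a = j then 1 else 0) ∧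
      (∀ j k b, ∑ a, M a b (j, k) = if b = k then 1 else 0) ∧
      (∀ j j' k k', j ≠ j' → k ≠ k' → ∀ a b,
        M a b (j, k) + M a b (j', k') = M a b (j, k') + M a b (j', k)) := by
  rintro ⟨M, hpos, hrow, hcol, hns⟩
  have h2 : 1 < n := hn
  -- M a b (j,k) = 0 when a ≠ j
  have hz1 : ∀ a b j k, a ≠ j → M a b (j, k) = 0 := by
    intro a b j k haj
    have hsum : ∑ b, M a b (j, k) = 0 := by simp [hrow j k a, haj]
    have := (Finset.sum_eq_zero_iff_of_nonneg (fun i _ => (hpos a i (j, k)).1)).mp hsum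
    exact this b (Finset.mem_univ b)
  have hz2 : ∀ a b j k, b ≠ k → M a b (j, k) = 0 := by
    intro a b j k hbk
    have hsum : ∑ a, M a b (j, k) = 0 := by simp [hcol j k b, hbk]
    have := (Finset.sum_eq_zero_iff_of_nonneg (fun i _ => (hpos i b (j, k)).1)).mp hsum
    exact this a (Finset.mem_univ a)
  have hone : ∀ j k, M j k (j, k) = 1 := by
    intro j k
    have hsum := hrow j k j
    have h1 : ∑ b, M j b (j, k) = M j k (j, k) := by
      apply Finset.sum_eq_single
      · intro b _ hb; exact hz2 j b j k hb
      · intro h; exact absurd (Finset.mem_univ k) h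
    rw [h1] at hsum; simpa using hsum
  set i0 : Fin n := ⟨0, by omega⟩
  set i1 : Fin n := ⟨1, by omega⟩
  have hne : i0 ≠ i1 := by simp [i0, i1, Fin.ext_iff]
  have := hns i0 i1 i0 i1 hne hne i0 i0
  rw [hone i0 i0, hz1 i0 i0 i1 i1 hne, hz2 i0 i0 i0 i1 hne, hz1 i0 i0 i1 i0 hne] at this
  linarith
end

section
/- Define, for a triple $(x,y,z)$ of elements of $\{0,1,2\}$ with sorted values $v_{\min} \le v_{\mathrm{mid}} \le v_{\max}$, the indicator $f(x,y,z) = (v_{\max}-v_{\mathrm{mid}})(v_{\mathrm{mid}}-v_{\min})$. Then $f(x,y,z) \le 1$ with equality iff $\{x,y,z\} = \{0,1,2\}$, and for any function $v : \{A,B,C,D\} \to \{0,1,2\}$, $f(v(A),v(B),v(C)) + f(v(B),v(C),v(D)) + f(v(C),v(D),v(A)) + f(v(D),v(A),v(B)) \le 2$. -/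
/-- The XOS distinctness indicator
`f(x,y,z) = (v_max - v_mid) * (v_mid - v_min)` for a triple of values. -/
def xosF (x y z : ℕ) : ℕ :=
  let vmax := max x (max y z)
  let vmin := min x (min y z)
  let vmid := x + y + z - vmax - vmin
  (vmax - vmid) * (vmid - vmin)

/-- for values in `{0,1,2}`, `f ≤ 1` with equality iff the three
values are pairwise distinct, and for any assignment `v : {A,B,C,D} → {0,1,2}`
the sum of the four cyclic indicators is at most `2` (the XOS
noncontextuality bound). -/
theorem xos_noncontextuality_bound :
    (∀ x y z : Fin 3, xosF x y z ≤ 1 ∧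
      (xosF x y z = 1 ↔ (x ≠ y ∧ y ≠ z ∧ x ≠ z))) ∧
    (∀ v : Fin 4 → Fin 3,
      xosF (v 0) (v 1) (v 2) + xosF (v 1) (v 2) (v 3) +
      xosF (v 2) (v 3) (v 0) + xosF (v 3) (v 0) (v 1) ≤ 2) := by
  constructor
  · decide
  · intro v
    have := fun i => (v i).isLt
    revert this
    generalize v 0 = a; generalize v 1 = b; generalize v 2 = c; generalize v 3 = d
    intro _
    fin_cases a <;> fin_cases b <;> fin_cases c <;> fin_cases d <;> decide
end

section
/- With $\varphi$ as above (linear, $e_1 \mapsto (0,0)$, $e_2 \mapsto (0,1)$, $e_3 \mapsto (1,0)$, $e_4 \mapsto (1,1)$), define the ontic distributions $\mu_X^+ = \tfrac12(e_1+e_2)$, $\mu_X^- = \tfrac12(e_3+e_4)$, $\mu_Z^+ = \tfrac12(e_1+e_3)$, $\mu_Z^- = \tfrac12(e_2+e_4)$, and for $\theta \in [0,\pi/2]$ with $\delta = \tfrac12(1+\sin\theta)$, $\upsilon = \cos^2(\theta/2)$, define $\mu_Y^+ = ((1-\delta)(1-\upsilon), (1-\delta)\upsilon, \delta(1-\upsilon),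 \delta\upsilon)$ (in coordinates w.r.t. $e_1,\dots,e_4$) and $\mu_Y^-$ its coordinate reversal. Then $\tfrac12(\mu_X^+ + \mu_X^-) = \tfrac12(\mu_Z^+ + \mu_Z^-) = (\tfrac14,\tfrac14,\tfrac14,\tfrac14)$, while $\tfrac12(\mu_Y^+ + \mu_Y^-) = \tfrac14(1+\xi, 1-\xi, 1-\xi, 1+\xi)$ with $\xi = \tfrac12\sin(2\theta)$; hence for $\theta \notin \{0, \pi/2\}$ the ontic mixture $\tfrac12(\mu_Y^+ + \mu_Y^-)$ differs from $\tfrac12(\mu_X^+ + \mu_X^-)$. -/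
open Real

/-- preparation contextuality computation.  With ontic
distributions `μX± , μZ±` the uniform pair-mixtures of basis vectors and
`μY±` the `θ`-dependent distributions (with `δ = (1+sin θ)/2`,
`υ = cos²(θ/2)`), the equal `X`- and `Z`-mixtures are both uniform, while the
equal `Y`-mixture is `¼(1+ξ, 1-ξ, 1-ξ, 1+ξ)` with `ξ = sin(2θ)/2`; hence for
`θ ∈ (0, π/2)` it differs from the uniform distribution. -/
theorem preparation_contextuality_ontic_mixtures
    (θ : ℝ) (hθ0 : 0 ≤ θ) (hθ1 : θ ≤ π / 2)
    (δ υ ξ : ℝ) (hδ : δ = (1 + sin θ) / 2) (hυ : υ = cos (θ / 2) ^ 2)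
    (hξ : ξ = sin (2 * θ) / 2)
    (e : Fin 4 → (Fin 4 → ℝ)) (he : ∀ i, e i = Pi.single i 1)
    (μXp μXm μZp μZm μYp μYm : Fin 4 → ℝ)
    (hXp : μXp = (1/2 : ℝ) • (e 0 + e 1))
    (hXm : μXm = (1/2 : ℝ) • (e 2 + e 3))
    (hZp : μZp = (1/2 : ℝ) • (e 0 + e 2))
    (hZm : μZm = (1/2 : ℝ) • (e 1 + e 3))
    (hYp : μYp = ![(1 - δ) * (1 - υ), (1 - δ) * υ, δ * (1 - υ), δ * υ])
    (hYm : μYm = ![δ * υ, δ * (1 - υ), (1 - δ) * υ, (1 - δ) * (1 - υ)]) :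
    (1/2 : ℝ) • (μXp + μXm) = ![1/4, 1/4, 1/4, 1/4] ∧
    (1/2 : ℝ) • (μZp + μZm) = ![1/4, 1/4, 1/4, 1/4] ∧
    (1/2 : ℝ) • (μYp + μYm) =
      (1/4 : ℝ) • ![1 + ξ, 1 - ξ, 1 - ξ, 1 + ξ] ∧
    (θ ≠ 0 → θ ≠ π / 2 →
      (1/2 : ℝ) • (μYp + μYm) ≠ (1/2 : ℝ) • (μXp + μXm)) := by
  have hυ' : υ = (1 + cos θ) / 2 := by rw [hυ, cos_sq, show 2*(θ/2)=θ by ring]; ring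
  have hξ' : ξ = sin θ * cos θ := by
    rw [hξ, sin_two_mul]; ring
  have hX : (1/2 : ℝ) • (μXp + μXm) = ![1/4, 1/4, 1/4, 1/4] := by
    subst hXp hXm
    funext i
    fin_cases i <;>
      simp [he, Pi.single_apply] <;> norm_num
  have hZ : (1/2 : ℝ) • (μZp + μZm) = ![1/4, 1/4, 1/4, 1/4] := by
    subst hZp hZm
    funext i
    fin_cases i <;>
      simp [he, Pi.single_apply] <;> norm_num
  have hY : (1/2 : ℝ) • (μYp + μYm) =
      (1/4 : ℝ) • ![1 + ξ, 1 - ξ, 1 - ξ, 1 + ξ] := by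
    subst hYp hYm
    funext i
    fin_cases i <;>
      simp [hδ, hυ', hξ'] <;> ring
  refine ⟨hX, hZ, hY, ?_⟩
  intro h0 h1 heq
  have hθ0' : 0 < θ := lt_of_le_of_ne hθ0 (Ne.symm h0)
  have hθ1' : θ < π / 2 := lt_of_le_of_ne hθ1 h1
  have hsin : 0 < sin θ := sin_pos_of_pos_of_lt_pi hθ0'
    (hθ1'.trans_le (by linarith [pi_pos]))
  have hcos : 0 < cos θ := cos_pos_of_mem_Ioo
    ⟨by linarith [pi_pos], hθ1'⟩
  have hξpos : 0 < ξ := by rw [hξ']; positivity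
  rw [hY, hX] at heq
  have := congrFun heq 0
  simp at this
  linarith
end

section
/- With the tetrahedron ontology $\gamma'_1 = (0,0,0)$, $\gamma'_2 = (0,1,1)$, $\gamma'_3 = (1,0,1)$, $\gamma'_4 = (1,1,0)$ and toy-theory states represented as $\mu_X^{+} = \tfrac12(\gamma'_1+\gamma'_2)$, $\mu_X^{-} = \tfrac12(\gamma'_3+\gamma'_4)$, $\mu_Y^{+} = \tfrac12(\gamma'_1+\gamma'_3)$, $\mu_Y^{-} = \tfrac12(\gamma'_2+\gamma'_4)$, $\mu_Z^{+} = \tfrac12(\gamma'_1+\gamma'_4)$, $\mu_Z^{-} = \tfrac12(\gamma'_2+\gamma'_3)$: there is no permutation $\sigma$ of $\{\gamma'_1,\gamma'_2,\gamma'_3,\gamma'_4\}$ whose induced action on midpoints simultaneously swaps $\mu_X^+ \leftrightarrow \mu_X^-$, $\mu_Y^+ \leftrightarrow \mu_Y^-$, and $\mu_Z^+ \leftrightarrow \mu_Z^-$. -/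
/-- no universal inverter in the s-type (tetrahedron) ontology
of the Spekkens toy bit.  With ontic points `γ'₁=(0,0,0), γ'₂=(0,1,1),
γ'₃=(1,0,1), γ'₄=(1,1,0)` and toy states the midpoints
`μX⁺=½(γ'₁+γ'₂), μX⁻=½(γ'₃+γ'₄), μY⁺=½(γ'₁+γ'₃), μY⁻=½(γ'₂+γ'₄),
μZ⁺=½(γ'₁+γ'₄), μZ⁻=½(γ'₂+γ'₃)`, there is no permutation `σ` of the four
ontic points whose induced action on midpoints simultaneously swaps
`μX⁺ ↔ μX⁻`, `μY⁺ ↔ μY⁻` and `μZ⁺ ↔ μZ⁻`. -/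
theorem no_universal_inverter_tetrahedron
    (γ : Fin 4 → (Fin 3 → ℝ))
    (hγ : γ = ![![0, 0, 0], ![0, 1, 1], ![1, 0, 1], ![1, 1, 0]])
    (mid : Fin 4 → Fin 4 → (Fin 3 → ℝ))
    (hmid : ∀ i j, mid i j = (1/2 : ℝ) • (γ i + γ j)) :
    ¬ ∃ σ : Equiv.Perm (Fin 4),
      mid (σ 0) (σ 1) = mid 2 3 ∧ mid (σ 2) (σ 3) = mid 0 1 ∧
      mid (σ 0) (σ 2) = mid 1 3 ∧ mid (σ 1) (σ 3) = mid 0 2 ∧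
      mid (σ 0) (σ 3) = mid 1 2 ∧ mid (σ 1) (σ 2) = mid 0 3 := by
  rintro ⟨σ, h1, h2, h3, h5, h4, h6⟩
  obtain ⟨a, ha⟩ : ∃ a, σ 0 = a := ⟨_, rfl⟩
  obtain ⟨b, hb⟩ : ∃ b, σ 1 = b := ⟨_, rfl⟩
  obtain ⟨c, hc⟩ : ∃ c, σ 2 = c := ⟨_, rfl⟩
  obtain ⟨d, hd⟩ : ∃ d, σ 3 = d := ⟨_, rfl⟩
  have n0 : a ≠ d := fun h => by
    have := σ.injective (ha.trans (h.trans hd.symm)); simp at this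
  have n1 : b ≠ d := fun h => by
    have := σ.injective (hb.trans (h.trans hd.symm)); simp at this
  have n2 : c ≠ d := fun h => by
    have := σ.injective (hc.trans (h.trans hd.symm)); simp at this
  simp only [hmid, hγ, ha, hb, hc, hd] at h1 h3 h4 h6
  have hf1 := congrFun h1 0
  have hf3 := congrFun h3 0
  have hf6 := congrFun h6 0
  have hg1 := congrFun h1 1
  have hg3 := congrFun h3 1
  have hg6 := congrFun h6 1
  clear h1 h2 h3 h5 h6 ha hb hc hd hmid hγ
  fin_cases a <;> fin_cases b <;> fin_cases c <;>
    simp [Matrix.vecHead, Matrix.vecTail] at hf1 hf3 hf6 hg1 hg3 hg6 ⊢ <;> norm_num at hf1 hf3 hf6 hg1 hg3 hg6 ⊢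
  -- only the case a = 3, b = 2, c = 1 survives; injectivity forces d = 0
  have hd0 : d = 0 := by
    simp only [ne_eq] at n0 n1 n2
    fin_cases d <;> simp_all
  subst hd0
  -- but then mid (σ 0) (σ 3) = mid 3 0 ≠ mid 1 2 (third coordinate)
  have hh4 := congrFun h4 2
  simp [Matrix.cons_val] at hh4
end
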